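/- If the interval [σ,π] in the permutation pattern poset is single, then μ(σ,π) = (−1)^{|π|−|σ|}·NE(σ,π). -/

import Mathlib

open scoped Classical

set_option maxHeartbeats 1000000

/-! ## The permutation pattern poset -/

/-- The type of all (finite) permutations: a permutation of length `n` is an element of
`Equiv.Perm (Fin n)`; the letter in position `i` is `p.2 i` (letters compared via the
order on `Fin n`). -/
abbrev PermPat : Type := Σ n : ℕ, Equiv.Perm (Fin n)

/-- Pattern containment: `PatLe σ π` iff `π` has a subsequence in the same relative order
as `σ`, i.e. there is an occurrence of `σ` in `π`. -/
def PatLe (p q : PermPat) : Prop :=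
  ∃ f : Fin p.1 ↪o Fin q.1, ∀ i j : Fin p.1, p.2 i < p.2 j ↔ q.2 (f i) < q.2 (f j)

lemma patLe_refl (p : PermPat) : PatLe p p := by
  refine ⟨(OrderIso.refl (Fin p.1)).toOrderEmbedding, fun i j => ?_⟩
  simp

lemma patLe_trans {p q r : PermPat} (h1 : PatLe p q) (h2 : PatLe q r) : PatLe p r := by
  obtain ⟨f, hf⟩ := h1
  obtain ⟨g, hg⟩ := h2
  exact ⟨f.trans g, fun i j => (hf i j).trans (hg (f i) (f j))⟩

lemma PatLe.len_le {p q : PermPat} (h : PatLe p q) : p.1 ≤ q.1 := by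
  obtain ⟨f, -⟩ := h
  simpa using Fintype.card_le_of_embedding f.toEmbedding

lemma StrictMono.fin_apply_eq {n : ℕ} {f : Fin n → Fin n} (hf : StrictMono f) (i : Fin n) :
    f i = i := by
  have hle : ∀ m : ℕ, ∀ j : Fin n, j.val = m → j.val ≤ (f j).val := by
    intro m
    induction m with
    | zero => intro j hj; omega
    | succ m ih =>
      intro j hj
      have hm : m < n := by omega
      have h1 : f ⟨m, hm⟩ < f j := hf (by simp [Fin.lt_def]; omega)
      have h2 := ih ⟨m, hm⟩ rfl
      simp only [Fin.lt_def] at h1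
      simp only [Fin.val_mk] at h1 h2
      omega
  have hge : ∀ m : ℕ, ∀ j : Fin n, j.val + m + 1 = n → (f j).val ≤ j.val := by
    intro m
    induction m with
    | zero => intro j hj; have := (f j).isLt; omega
    | succ m ih =>
      intro j hj
      have hs : j.val + 1 < n := by omega
      have h1 : f j < f ⟨j.val + 1, hs⟩ := hf (by simp [Fin.lt_def])
      have h2 := ih ⟨j.val + 1, hs⟩ (by simp only [Fin.val_mk]; omega)
      simp only [Fin.lt_def] at h1
      simp only [Fin.val_mk] at h1 h2
      omega
  exact Fin.ext (le_antisymm (hge (n - 1 - i.val) i (by have := i.isLt; omega)) (hle i.val i rfl))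

lemma patLe_antisymm {p q : PermPat} (hpq : PatLe p q) (hqp : PatLe q p) : p = q := by
  obtain ⟨k, σ⟩ := p
  obtain ⟨n, π⟩ := q
  have hkn : k = n := le_antisymm hpq.len_le hqp.len_le
  subst hkn
  obtain ⟨f, hf⟩ := hpq
  have hfid : ∀ i, f i = i := fun i => f.strictMono.fin_apply_eq i
  have key : ∀ i j : Fin k, σ i < σ j ↔ π i < π j := by
    intro i j
    simpa [hfid] using hf i j
  have hmono : StrictMono (fun a => π (σ.symm a)) := by
    intro a b hab
    have : σ (σ.symm a) < σ (σ.symm b) := by simpa using hab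
    exact (key _ _).mp this
  have hid : ∀ a, π (σ.symm a) = a := fun a => hmono.fin_apply_eq a
  have hσπ : σ = π := by
    apply Equiv.ext
    intro x
    have := hid (σ x)
    simpa using this.symm
  rw [hσπ]

/-- The permutation pattern poset `𝒫`. -/
instance : PartialOrder PermPat where
  le := PatLe
  le_refl := patLe_refl
  le_trans _ _ _ := patLe_trans
  le_antisymm _ _ := patLe_antisymm

lemma PermPat.le_def {p q : PermPat} : p ≤ q ↔ PatLe p q := Iff.rfl

/-! ## The Möbius function of the pattern poset

`permMu` is the Möbius function of the pattern poset: `μ(σ,σ) = 1`,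
`μ(σ,π) = -∑_{σ ≤ z < π} μ(σ,z)` for `σ < π`, and `μ(σ,π) = 0` if `σ ≰ π`.
(Every `z < π` is of length strictly smaller than `π`, so the inner sum ranges over
the permutations of each length `m < |π|`.) -/
noncomputable def permMu (p q : PermPat) : ℤ :=
  if p = q then 1
  else if PatLe p q then
    - ∑ m : Fin q.1, ∑ z : Equiv.Perm (Fin m.1),
        if PatLe p ⟨m.1, z⟩ ∧ PatLe ⟨m.1, z⟩ q then permMu p ⟨m.1, z⟩ else 0
  else 0
termination_by q.1
decreasing_by exact m.isLt

/-! ## The Möbius function of a finite poset -/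

/-- The Möbius function `μ(a,b)` of a finite poset. -/
noncomputable def muPair {X : Type*} [PartialOrder X] [Fintype X] (a b : X) : ℤ :=
  if a = b then 1
  else if a ≤ b then
    - ∑ z ∈ (Finset.univ.filter fun z : X => a ≤ z ∧ z < b).attach, muPair a z.1
  else 0
termination_by Set.ncard {z : X | z < b}
decreasing_by
  rename_i z
  have hz : z.1 < b := ((Finset.mem_filter.mp z.2).2).2
  exact Set.ncard_lt_ncard
    ((Set.ssubset_iff_of_subset (fun w hw => lt_trans hw hz)).mpr ⟨z.1, hz, fun hmem => absurd hmem (by exact lt_irrefl _)⟩)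
    (Set.toFinite _)

instance instFiniteOption' {α : Type*} [Finite α] : Finite (Option α) :=
  Finite.of_equiv (α ⊕ PUnit.{1}) (Equiv.optionEquivSumPUnit.{0} α).symm
instance {α : Type*} [Finite α] : Finite (WithTop α) := inferInstanceAs (Finite (Option α))
instance {α : Type*} [Finite α] : Finite (WithBot α) := inferInstanceAs (Finite (Option α))
instance {α : Type*} [Fintype α] : Fintype (WithTop α) := inferInstanceAs (Fintype (Option α))
instance {α : Type*} [Fintype α] : Fintype (WithBot α) := inferInstanceAs (Fintype (Option α))

/-- For a finite poset `X`, `muHat X` is `μ(0̂,1̂)` computed in the poset obtained from `X`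
by adjoining a new bottom element `0̂` and a new top element `1̂`.  (For infinite `X` the
junk value `0` is returned.) -/
noncomputable def muHat (X : Type*) [PartialOrder X] : ℤ :=
  if h : Finite X then
    letI := h
    letI : Fintype (WithBot (WithTop X)) := Fintype.ofFinite _
    muPair (⊥ : WithBot (WithTop X)) ⊤
  else 0

/-! ## Adjacencies, embeddings, normality -/

/-- The position one step before `j` (or `j` itself when `j = 0`). -/
def prevPos {n : ℕ} (j : Fin n) : Fin n := ⟨j.val - 1, lt_of_le_of_lt (Nat.sub_le _ _) j.isLt⟩

/-- `Linked π j` says position `j` is linked to the preceding position, i.e. the letters in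
positions `j-1, j` have consecutive values.  These are exactly the positions lying in the
tail of some adjacency of `π` (an adjacency is a maximal factor of consecutively valued
increasing or decreasing letters; its tail is all but its first letter). -/
def Linked {n : ℕ} (π : Equiv.Perm (Fin n)) (j : Fin n) : Prop :=
  0 < j.val ∧ ((π j).val + 1 = (π (prevPos j)).val ∨ (π (prevPos j)).val + 1 = (π j).val)

/-- The number of adjacencies (maximal linked runs) of `π`. -/
noncomputable def numBlocks {n : ℕ} (π : Equiv.Perm (Fin n)) : ℕ :=
  (Finset.univ.filter fun j : Fin n => ¬ Linked π j).card

/-- The index (starting from 0) of the adjacency of `π` containing position `j`. -/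
noncomputable def blockIdx {n : ℕ} (π : Equiv.Perm (Fin n)) (j : Fin n) : ℕ :=
  (Finset.univ.filter fun m : Fin n => ¬ Linked π m ∧ m ≤ j).card - 1

/-- The set of positions in the `i`-th adjacency of `π`. -/
noncomputable def blockF {n : ℕ} (π : Equiv.Perm (Fin n)) (i : ℕ) : Finset (Fin n) :=
  Finset.univ.filter fun j => blockIdx π j = i

/-- The standardization of an injective tuple `v` of values in `Fin n`: the permutation of
`Fin m` whose letters are in the same relative order as `v`. -/
noncomputable def stdize {m n : ℕ} (v : Fin m → Fin n) (hv : Function.Injective v) :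
    Equiv.Perm (Fin m) :=
  (Equiv.ofInjective v hv).trans
    (monoEquivOfFin (Set.range v)
      (by rw [Set.card_range_of_injective hv, Fintype.card_fin])).symm.toEquiv

/-- The pattern (as an abstract permutation) formed by the letters of `π` in the set `E`
of positions. -/
noncomputable def patternOf {n : ℕ} (π : Equiv.Perm (Fin n)) (E : Finset (Fin n)) : PermPat :=
  ⟨E.card, stdize (fun i => π ((E.orderIsoOfFin rfl) i))
    (by
      intro i j hij
      exact (E.orderIsoOfFin rfl).injective (Subtype.coe_injective (π.injective hij)))⟩

/-- `E` is (the set of positions of the nonzero entries of) an embedding of `p` in `π`: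
the letters of `π` in positions `E` form an occurrence of `p`. -/
def IsEmb (p : PermPat) {n : ℕ} (π : Equiv.Perm (Fin n)) (E : Finset (Fin n)) : Prop :=
  patternOf π E = p

/-- An embedding (given by its set `E` of nonzero positions) is normal if every position in
the tail of an adjacency of `π` is nonzero. -/
def IsNormal {n : ℕ} (π : Equiv.Perm (Fin n)) (E : Finset (Fin n)) : Prop :=
  ∀ j, Linked π j → j ∈ E

/-- `NE p π`: the number of normal embeddings of `p` in `π`. -/
noncomputable def NE (p : PermPat) {n : ℕ} (π : Equiv.Perm (Fin n)) : ℕ :=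
  Set.ncard {E : Finset (Fin n) | IsEmb p π E ∧ IsNormal π E}

/-- An embedding is rightmost if, within each adjacency of `π`, all of its zero entries
precede all of its nonzero entries. -/
def IsRightmost {n : ℕ} (π : Equiv.Perm (Fin n)) (E : Finset (Fin n)) : Prop :=
  ∀ i j : Fin n, blockIdx π i = blockIdx π j → i ≤ j → i ∈ E → j ∈ E

/-- Membership in `Ê^{p,π}`, the set of rightmost embeddings of `p` in `π`. -/
def EhatMem (p : PermPat) {n : ℕ} (π : Equiv.Perm (Fin n)) (E : Finset (Fin n)) : Prop :=
  IsEmb p π E ∧ IsRightmost π E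

/-- Membership in `EZ^{p,π}`: `S` is a nonempty set of rightmost embeddings of `p` in `π`
whose zero sets have empty intersection (every position is nonzero in some member). -/
def EZmem (p : PermPat) {n : ℕ} (π : Equiv.Perm (Fin n)) (S : Finset (Finset (Fin n))) : Prop :=
  S.Nonempty ∧ (∀ E ∈ S, EhatMem p π E) ∧ ∀ j : Fin n, ∃ E ∈ S, j ∈ E

/-- The sum `∑_{S ∈ EZ^{p,π}} (-1)^{|S|}`. -/
noncomputable def EZsum (p : PermPat) {n : ℕ} (π : Equiv.Perm (Fin n)) : ℤ :=
  ∑ S ∈ Finset.univ.filter (fun S : Finset (Finset (Fin n)) => EZmem p π S), (-1 : ℤ) ^ S.card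

/-! ## The adjacency decomposition and the posets `P(η)`, `A^{σ,π}` -/

/-- `π̂`, the adjacency decomposition of `π`, as a tuple of permutations. -/
noncomputable def Phat {n : ℕ} (π : Equiv.Perm (Fin n)) : Fin (numBlocks π) → PermPat :=
  fun i => patternOf π (blockF π i.val)

/-- `η̂`, the decomposition of an embedding (with nonzero positions `E`) along the
adjacencies of `π`. -/
noncomputable def etaHat {n : ℕ} (π : Equiv.Perm (Fin n)) (E : Finset (Fin n)) :
    Fin (numBlocks π) → PermPat :=
  fun i => patternOf π (E.filter fun j => blockIdx π j = i.val)

/-- The product poset `P(η) = [η̂_1,π̂_1] × ⋯ × [η̂_t,π̂_t]`, as a subset of the product of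
copies of the pattern poset indexed by the adjacencies of `π`. -/
noncomputable def Pemb {n : ℕ} (π : Equiv.Perm (Fin n)) (E : Finset (Fin n)) :
    Set (Fin (numBlocks π) → PermPat) :=
  Set.Icc (etaHat π E) (Phat π)

/-- `P(η)°`: the product poset `P(η)` with its bottom element `η̂` and top element `π̂`
removed. -/
noncomputable def PembO {n : ℕ} (π : Equiv.Perm (Fin n)) (E : Finset (Fin n)) :
    Set (Fin (numBlocks π) → PermPat) :=
  Pemb π E \ {etaHat π E, Phat π}

/-- `A^{p,π} = ⋃_{η ∈ Ê^{p,π}} P(η)°`. -/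
noncomputable def Aspace (p : PermPat) {n : ℕ} (π : Equiv.Perm (Fin n)) :
    Set (Fin (numBlocks π) → PermPat) :=
  ⋃ E ∈ {E : Finset (Fin n) | EhatMem p π E}, PembO π E

/-! ## Sundry notions -/

/-- The number of descents of a permutation. -/
noncomputable def desNum {n : ℕ} (π : Equiv.Perm (Fin n)) : ℕ :=
  (Finset.univ.filter fun j : Fin n => ∃ h : j.val + 1 < n, π ⟨j.val + 1, h⟩ < π j).card

/-- The direct sum of two permutations. -/
def dsum {a b : ℕ} (σ : Equiv.Perm (Fin a)) (τ : Equiv.Perm (Fin b)) :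
    Equiv.Perm (Fin (a + b)) :=
  finSumFinEquiv.symm.trans ((Equiv.sumCongr σ τ).trans finSumFinEquiv)

/-- A permutation is indecomposable if it is nonempty and not the direct sum of two
nonempty permutations. -/
def Indecomp (p : PermPat) : Prop :=
  0 < p.1 ∧ ¬ ∃ (a b : ℕ) (σ : Equiv.Perm (Fin a)) (τ : Equiv.Perm (Fin b)),
    0 < a ∧ 0 < b ∧ p = ⟨a + b, dsum σ τ⟩

/-- `dpow lam m = lam ⊕ ⋯ ⊕ lam` (`m` summands). -/
def dpow {l : ℕ} (lam : Equiv.Perm (Fin l)) : (m : ℕ) → Equiv.Perm (Fin (m * l))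
  | 0 => (finCongr (Nat.zero_mul l).symm).permCongr 1
  | m + 1 => (finCongr (by ring : m * l + l = (m + 1) * l)).permCongr (dsum (dpow lam m) lam)

/-- Direct sum of permutations, on `PermPat`. -/
def dsumP (p q : PermPat) : PermPat := ⟨p.1 + q.1, dsum p.2 q.2⟩

/-- The direct sum of a list of permutations. -/
def dsumList : List PermPat → PermPat
  | [] => ⟨0, 1⟩
  | p :: L => dsumP p (dsumList L)

/-- The increasing permutation `ι_n = 12⋯n`. -/
def iota (n : ℕ) : PermPat := ⟨n, 1⟩

/-!
On `[σ, π]` the Möbius function is determined by `μ(π, π) = 1` and `∑_{λ ≤ w ≤ π} μ(w, π) = 0`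
for `λ < π`, so it suffices that `f w = (-1)^(|π| - |w|) NE(w, π)` satisfies the same relations.
Grouping normal embeddings by their pattern, `∑_{λ ≤ w ≤ π} f w` is the signed count of the normal
position sets `E` whose pattern contains `λ`. Singleness gives a letter outside every rightmost
embedding of `λ`, hence also such a letter `h` at the start of an adjacency, and toggling `h` is a
sign-reversing involution on these sets: it keeps `E` normal, and removing `h` keeps `λ` contained,
because an occurrence of `λ` inside a normal `E` can be slid rightwards within adjacencies to a
rightmost one, still inside `E`, which avoids `h`.
-/

theorem IncidenceAlgebra.mu_eq_of_sum_Icc_eq_zero {𝕜 α : Type*} [Ring 𝕜] [PartialOrder α]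
    [LocallyFiniteOrder α] [DecidableEq α] {f : α → 𝕜} {a b : α} (hab : a ≤ b) (hb : f b = 1)
    (hsum : ∀ x, a ≤ x → x < b → ∑ y ∈ Finset.Icc x b, f y = 0) :
    IncidenceAlgebra.mu 𝕜 a b = f a := by
  suffices h : ∀ N x, a ≤ x → x ≤ b → (Finset.Icc x b).card = N → mu 𝕜 x b = f x from
    h _ a le_rfl hab rfl
  intro N
  induction N using Nat.strong_induction_on with
  | _ N ih =>
    rintro x hax hxb rfl
    obtain rfl | hxb := hxb.eq_or_lt
    · rw [mu_self, hb]
    have hIoc : ∑ y ∈ Finset.Ioc x b, mu 𝕜 y b = ∑ y ∈ Finset.Ioc x b, f y := by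
      refine Finset.sum_congr rfl fun y hy => ?_
      obtain ⟨hxy, hyb⟩ := Finset.mem_Ioc.1 hy
      exact ih _ (Finset.card_lt_card (Finset.Icc_ssubset_Icc_left hxb.le hxy le_rfl)) y
        (hax.trans hxy.le) hyb rfl
    rw [mu_eq_neg_sum_Ioc_of_ne hxb.ne, hIoc, eq_comm, ← add_eq_zero_iff_eq_neg',
      Finset.sum_Ioc_add_eq_sum_Icc hxb.le, hsum x hax hxb]

namespace PermPat

lemma perm_eq_of_lt_iff_lt {m : ℕ} {σ τ : Equiv.Perm (Fin m)} (h : ∀ i j, σ i < σ j ↔ τ i < τ j) :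
    σ = τ := by
  have hle : PatLe ⟨m, σ⟩ ⟨m, τ⟩ := ⟨(OrderIso.refl _).toOrderEmbedding, h⟩
  have hge : PatLe ⟨m, τ⟩ ⟨m, σ⟩ := ⟨(OrderIso.refl _).toOrderEmbedding, fun i j => (h i j).symm⟩
  exact eq_of_heq (Sigma.mk.inj (patLe_antisymm hle hge)).2

lemma eq_of_le_of_len_eq {p q : PermPat} (h : p ≤ q) (hl : p.1 = q.1) : p = q := by
  obtain ⟨k, σ⟩ := p
  obtain ⟨n, π⟩ := q
  obtain rfl : k = n := hl
  obtain ⟨f, hf⟩ := h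
  have hfid : ∀ i, f i = i := f.strictMono.fin_apply_eq
  rw [perm_eq_of_lt_iff_lt (σ := σ) (τ := π) fun i j => by simpa [hfid] using hf i j]

lemma len_lt_of_lt {p q : PermPat} (h : p < q) : p.1 < q.1 :=
  h.le.len_le.lt_of_ne fun hl => h.ne (eq_of_le_of_len_eq h.le hl)

lemma finite_setOf_len_le (N : ℕ) : {p : PermPat | p.1 ≤ N}.Finite := by
  refine (Set.finite_range fun x : Σ m : Fin (N + 1), Equiv.Perm (Fin m) =>
    (⟨x.1, x.2⟩ : PermPat)).subset ?_
  rintro ⟨m, τ⟩ (hm : m ≤ N)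
  exact ⟨⟨⟨m, Nat.lt_succ_of_le hm⟩, τ⟩, rfl⟩

noncomputable instance : LocallyFiniteOrder PermPat :=
  LocallyFiniteOrder.ofFiniteIcc fun _ q =>
    (finite_setOf_len_le q.1).subset fun _ hp => hp.2.len_le

lemma sum_fin_sum_perm_eq_sum_Ico {M : Type*} [AddCommMonoid M] (p q : PermPat) (g : PermPat → M) :
    ∑ m : Fin q.1, ∑ z : Equiv.Perm (Fin m.1),
        (if PatLe p ⟨m.1, z⟩ ∧ PatLe ⟨m.1, z⟩ q then g ⟨m.1, z⟩ else 0) =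
      ∑ x ∈ Finset.Ico p q, g x := by
  let e : (Σ m : Fin q.1, Equiv.Perm (Fin m)) ↪ PermPat :=
    Function.Embedding.sigmaMap Fin.valEmbedding fun _ => Function.Embedding.refl _
  have hIco : Finset.Ico p q = (Finset.univ.map e).filter fun x => p ≤ x ∧ x ≤ q := by
    ext x
    simp only [Finset.mem_Ico, Finset.mem_filter, Finset.mem_map, Finset.mem_univ, true_and]
    constructor
    · rintro ⟨hpx, hxq⟩
      exact ⟨⟨⟨⟨x.1, len_lt_of_lt hxq⟩, x.2⟩, rfl⟩, hpx, hxq.le⟩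
    · rintro ⟨⟨y, rfl⟩, hpx, hxq⟩
      refine ⟨hpx, lt_of_le_of_ne hxq fun h => ?_⟩
      have hlen : y.1.val = q.1 := congrArg Sigma.fst h
      exact absurd y.1.isLt (by omega)
  rw [hIco, Finset.sum_filter, Finset.sum_map, Fintype.sum_sigma]
  rfl

theorem permMu_eq_mu (p q : PermPat) : permMu p q = IncidenceAlgebra.mu ℤ p q := by
  induction hq : q.1 using Nat.strong_induction_on generalizing q with
  | _ N ih =>
    rw [permMu]
    split_ifs with hpq hle
    · rw [hpq, IncidenceAlgebra.mu_self]
    · rw [IncidenceAlgebra.mu_eq_neg_sum_Ico_of_ne hpq, sum_fin_sum_perm_eq_sum_Ico]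
      refine congrArg _ (Finset.sum_congr rfl fun x hx => ?_)
      exact ih x.1 (hq ▸ len_lt_of_lt (Finset.mem_Ico.1 hx).2) x rfl
    · exact (IncidenceAlgebra.apply_eq_zero_of_not_le hle _).symm

end PermPat

section Pattern

variable {n : ℕ} (π : Equiv.Perm (Fin n))

lemma patternOf_lt_iff (E : Finset (Fin n)) (i j : Fin E.card) :
    (patternOf π E).2 i < (patternOf π E).2 j ↔
      π (E.orderEmbOfFin rfl i) < π (E.orderEmbOfFin rfl j) := by
  change stdize _ _ i < stdize _ _ j ↔ _
  simp only [stdize, Equiv.trans_apply, RelIso.coe_fn_toEquiv, OrderIso.lt_iff_lt]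
  exact Iff.rfl

lemma patternOf_eq_of_strictMono {m : ℕ} (τ : Equiv.Perm (Fin m)) {E : Finset (Fin n)}
    {g : Fin m → Fin n} (hg : StrictMono g) (hE : Finset.univ.image g = E)
    (hτ : ∀ i j, τ i < τ j ↔ π (g i) < π (g j)) : patternOf π E = ⟨m, τ⟩ := by
  obtain rfl : E.card = m := by
    rw [← hE, Finset.card_image_of_injective _ hg.injective, Finset.card_univ, Fintype.card_fin]
  obtain rfl : g = E.orderEmbOfFin rfl :=
    Finset.orderEmbOfFin_unique rfl (fun x => hE ▸ Finset.mem_image_of_mem g (Finset.mem_univ x)) hg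
  exact Sigma.ext rfl (heq_of_eq (PermPat.perm_eq_of_lt_iff_lt fun i j =>
    (patternOf_lt_iff π E i j).trans (hτ i j).symm))

lemma patternOf_univ : patternOf π Finset.univ = ⟨n, π⟩ :=
  patternOf_eq_of_strictMono π π strictMono_id (by simp) fun _ _ => Iff.rfl

lemma patternOf_le_patternOf {E F : Finset (Fin n)} (h : E ⊆ F) :
    patternOf π E ≤ patternOf π F := by
  have hmem : ∀ i, E.orderEmbOfFin rfl i ∈ F := fun i => h (Finset.orderEmbOfFin_mem E rfl i)
  let f : Fin E.card → Fin F.card := fun i => (F.orderIsoOfFin rfl).symm ⟨_, hmem i⟩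
  have hf : ∀ i, F.orderEmbOfFin rfl (f i) = E.orderEmbOfFin rfl i := fun i => by
    rw [← Finset.coe_orderIsoOfFin_apply, OrderIso.apply_symm_apply]
  have hfmono : StrictMono f := fun i j hij =>
    (F.orderIsoOfFin rfl).symm.strictMono ((E.orderEmbOfFin rfl).strictMono hij)
  refine ⟨OrderEmbedding.ofStrictMono f hfmono, fun (i j : Fin E.card) => ?_⟩
  refine (patternOf_lt_iff π E i j).trans ?_
  rw [← hf i, ← hf j]
  exact (patternOf_lt_iff π F (f i) (f j)).symm

lemma patternOf_le (E : Finset (Fin n)) : patternOf π E ≤ ⟨n, π⟩ :=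
  patternOf_univ π ▸ patternOf_le_patternOf π (Finset.subset_univ E)

lemma exists_subset_patternOf_eq {p : PermPat} {E : Finset (Fin n)} (h : p ≤ patternOf π E) :
    ∃ E' ⊆ E, patternOf π E' = p := by
  obtain ⟨f, hf⟩ := h
  let g : Fin p.1 → Fin n := fun i => E.orderEmbOfFin rfl (f i)
  have hg : StrictMono g := (E.orderEmbOfFin rfl).strictMono.comp f.strictMono
  refine ⟨Finset.univ.image g, ?_, patternOf_eq_of_strictMono π p.2 hg rfl fun i j => ?_⟩
  · rintro _ hx
    obtain ⟨i, -, rfl⟩ := Finset.mem_image.1 hx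
    exact Finset.orderEmbOfFin_mem E rfl (f i)
  · exact (hf i j).trans (patternOf_lt_iff π E (f i) (f j))

end Pattern

lemma Nat.exists_ge_lt_and_not_succ {P : ℕ → Prop} {a b : ℕ} (hab : a ≤ b) (ha : P a)
    (hb : ¬ P b) : ∃ c, a ≤ c ∧ c < b ∧ P c ∧ ¬ P (c + 1) := by
  induction b, hab using Nat.le_induction with
  | base => exact absurd ha hb
  | succ b hab ih =>
    by_cases hPb : P b
    · exact ⟨b, hab, b.lt_succ_self, hPb, hb⟩
    · obtain ⟨c, hac, hcb, hc, hc1⟩ := ih hPb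
      exact ⟨c, hac, hcb.trans b.lt_succ_self, hc, hc1⟩

section Adjacency

variable {n : ℕ} (π : Equiv.Perm (Fin n))

lemma not_linked_zero (hn : 0 < n) : ¬ Linked π ⟨0, hn⟩ :=
  fun h => Nat.lt_irrefl 0 h.1

lemma linked_of_blockIdx_eq {a b m : Fin n} (h : blockIdx π a = blockIdx π b) (ham : a < m)
    (hmb : m ≤ b) : Linked π m := by
  by_contra hm
  let S : Fin n → Finset (Fin n) := fun x => Finset.univ.filter fun y => ¬ Linked π y ∧ y ≤ x
  have hpos : 0 < (S a).card :=
    Finset.card_pos.2 ⟨⟨0, a.pos⟩, Finset.mem_filter.2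
      ⟨Finset.mem_univ _, not_linked_zero π a.pos, Fin.le_def.2 (Nat.zero_le _)⟩⟩
  have hlt : (S a).card < (S b).card := by
    refine Finset.card_lt_card ⟨fun y hy => ?_, fun hsub => ?_⟩
    · simp only [S, Finset.mem_filter, Finset.mem_univ, true_and] at hy ⊢
      exact ⟨hy.1, hy.2.trans (ham.le.trans hmb)⟩
    · have hmS : m ∈ S b := Finset.mem_filter.2 ⟨Finset.mem_univ _, hm, hmb⟩
      exact absurd (Finset.mem_filter.1 (hsub hmS)).2.2 (not_le.2 ham)
  change (S a).card - 1 = (S b).card - 1 at h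
  omega

lemma exists_unlinked_le_blockIdx_eq (j : Fin n) :
    ∃ h ≤ j, ¬ Linked π h ∧ blockIdx π h = blockIdx π j := by
  let S : Finset (Fin n) := Finset.univ.filter fun y => ¬ Linked π y ∧ y ≤ j
  have hS : S.Nonempty :=
    ⟨⟨0, j.pos⟩, Finset.mem_filter.2
      ⟨Finset.mem_univ _, not_linked_zero π j.pos, Fin.le_def.2 (Nat.zero_le _)⟩⟩
  obtain ⟨-, hlink, hle⟩ := Finset.mem_filter.1 (S.max'_mem hS)
  refine ⟨S.max' hS, hle, hlink, congrArg (· - 1) (congrArg Finset.card ?_)⟩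
  ext y
  simp only [Finset.mem_filter, Finset.mem_univ, true_and, and_congr_right_iff]
  exact fun hy => ⟨fun h => h.trans hle,
    fun h => S.le_max' y (Finset.mem_filter.2 ⟨Finset.mem_univ _, hy, h⟩)⟩

lemma exists_unlinked_forall_ehatMem_not_mem {p : PermPat} {j : Fin n}
    (hj : ∀ E, EhatMem p π E → j ∉ E) : ∃ h, ¬ Linked π h ∧ ∀ E, EhatMem p π E → h ∉ E := by
  obtain ⟨h, hhj, hlink, hblock⟩ := exists_unlinked_le_blockIdx_eq π j
  exact ⟨h, hlink, fun E hE hh => hj E hE (hE.2 h j hblock hhj hh)⟩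

lemma exists_succ_not_mem_of_not_isRightmost {E : Finset (Fin n)} (hE : ¬ IsRightmost π E) :
    ∃ i j : Fin n, j.val = i.val + 1 ∧ Linked π j ∧ i ∈ E ∧ j ∉ E := by
  simp only [IsRightmost, not_forall] at hE
  obtain ⟨a, b, hblock, hab, ha, hb⟩ := hE
  obtain ⟨c, hac, hcb, ⟨hcn, hc⟩, hc1⟩ :=
    Nat.exists_ge_lt_and_not_succ (P := fun m => ∃ h : m < n, (⟨m, h⟩ : Fin n) ∈ E)
      (Fin.le_def.1 hab) ⟨a.2, ha⟩ fun ⟨_, h⟩ => hb h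
  have hc1n : c + 1 < n := lt_of_le_of_lt hcb b.2
  refine ⟨⟨c, hcn⟩, ⟨c + 1, hc1n⟩, rfl, ?_, hc, fun h => hc1 ⟨hc1n, h⟩⟩
  exact linked_of_blockIdx_eq π hblock (Fin.lt_def.2 (Nat.lt_succ_of_le hac)) (Fin.le_def.2 hcb)

end Adjacency

section Shift

variable {n : ℕ} (π : Equiv.Perm (Fin n))

lemma swap_lt_swap_iff_of_val_eq_succ {i j a b : Fin n} (hij : j.val = i.val + 1) (ha : a ≠ j)
    (hb : b ≠ j) : Equiv.swap i j a < Equiv.swap i j b ↔ a < b := by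
  have ha' : a.val ≠ j.val := Fin.val_ne_of_ne ha
  have hb' : b.val ≠ j.val := Fin.val_ne_of_ne hb
  rw [Equiv.swap_apply_def, Equiv.swap_apply_def]
  split_ifs <;> simp only [Fin.lt_def] <;> subst_vars <;> omega

-- `π i` and `π j` are consecutive values, so no other value lies between them.
lemma apply_swap_lt_apply_swap_iff {i j a b : Fin n} (hij : j.val = i.val + 1)
    (hj : Linked π j) (ha : a ≠ j) (hb : b ≠ j) :
    π (Equiv.swap i j a) < π (Equiv.swap i j b) ↔ π a < π b := by
  have hprev : prevPos j = i := Fin.ext (by simp [prevPos, hij])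
  have hadj : (π j).val + 1 = (π i).val ∨ (π i).val + 1 = (π j).val := hprev ▸ hj.2
  have hval : ∀ x, x ≠ i → x ≠ j → (π x).val ≠ (π i).val ∧ (π x).val ≠ (π j).val :=
    fun x hxi hxj =>
      ⟨fun h => hxi (π.injective (Fin.ext h)), fun h => hxj (π.injective (Fin.ext h))⟩
  rcases eq_or_ne i a with rfl | hai <;> rcases eq_or_ne i b with rfl | hbi
  · simp only [lt_irrefl]
  · rw [Equiv.swap_apply_left, Equiv.swap_apply_of_ne_of_ne hbi.symm hb, Fin.lt_def, Fin.lt_def]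
    have := hval b hbi.symm hb
    omega
  · rw [Equiv.swap_apply_left, Equiv.swap_apply_of_ne_of_ne hai.symm ha, Fin.lt_def, Fin.lt_def]
    have := hval a hai.symm ha
    omega
  · rw [Equiv.swap_apply_of_ne_of_ne hai.symm ha, Equiv.swap_apply_of_ne_of_ne hbi.symm hb]

lemma patternOf_map_swap {E : Finset (Fin n)} {i j : Fin n} (hij : j.val = i.val + 1)
    (hj : Linked π j) (hjE : j ∉ E) :
    patternOf π (E.map (Equiv.swap i j).toEmbedding) = patternOf π E := by
  have hne : ∀ k, E.orderEmbOfFin rfl k ≠ j := fun k h =>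
    hjE (h ▸ Finset.orderEmbOfFin_mem E rfl k)
  refine patternOf_eq_of_strictMono (m := E.card) π (patternOf π E).2
    (g := Equiv.swap i j ∘ E.orderEmbOfFin rfl)
    (fun k l hkl => (swap_lt_swap_iff_of_val_eq_succ hij (hne k) (hne l)).2
      ((E.orderEmbOfFin rfl).strictMono hkl)) ?_ fun k l => ?_
  · rw [← Finset.image_image, Finset.image_orderEmbOfFin_univ, Finset.map_eq_image]
    rfl
  · exact (patternOf_lt_iff π E k l).trans
      (apply_swap_lt_apply_swap_iff π hij hj (hne k) (hne l)).symm

end Shift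

section SignedSum

variable {n : ℕ} (π : Equiv.Perm (Fin n))

-- Slide a letter of `E` one step to the right inside its adjacency until `E` is rightmost;
-- the new position lies in a tail, hence in `F`, and the pattern is unchanged.
lemma exists_isRightmost_subset {E F : Finset (Fin n)} (hF : IsNormal π F) (hEF : E ⊆ F) :
    ∃ R ⊆ F, IsRightmost π R ∧ patternOf π R = patternOf π E := by
  induction hN : ∑ m ∈ E, (n - m.val) using Nat.strong_induction_on generalizing E with
  | _ N ih =>
    by_cases hE : IsRightmost π E
    · exact ⟨E, hEF, hE, rfl⟩
    obtain ⟨i, j, hij, hj, hiE, hjE⟩ := exists_succ_not_mem_of_not_isRightmost π hE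
    have hswap : ∀ y ∈ E, y ≠ i → Equiv.swap i j y = y := fun y hy hyi =>
      Equiv.swap_apply_of_ne_of_ne hyi (ne_of_mem_of_not_mem hy hjE)
    have hsub : E.map (Equiv.swap i j).toEmbedding ⊆ F := by
      intro x hx
      obtain ⟨y, hy, rfl⟩ := Finset.mem_map.1 hx
      obtain rfl | hyi := eq_or_ne y i
      · simpa using hF j hj
      · simpa [hswap y hy hyi] using hEF hy
    have hlt : ∑ m ∈ E.map (Equiv.swap i j).toEmbedding, (n - m.val) < N := by
      rw [Finset.sum_map, ← hN]
      refine Finset.sum_lt_sum (fun y hy => ?_) ⟨i, hiE, ?_⟩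
      · obtain rfl | hyi := eq_or_ne y i
        · simp only [Equiv.coe_toEmbedding, Equiv.swap_apply_left]
          omega
        · simp [hswap y hy hyi]
      · simp only [Equiv.coe_toEmbedding, Equiv.swap_apply_left]
        omega
    obtain ⟨R, hRF, hR, hRE⟩ := ih _ hlt hsub rfl
    exact ⟨R, hRF, hR, hRE.trans (patternOf_map_swap π hij hj hjE)⟩

lemma le_patternOf_erase {p : PermPat} {E : Finset (Fin n)} {h : Fin n} (hE : IsNormal π E)
    (hp : p ≤ patternOf π E) (hh : ∀ R, EhatMem p π R → h ∉ R) :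
    p ≤ patternOf π (E.erase h) := by
  obtain ⟨E', hE'E, rfl⟩ := exists_subset_patternOf_eq π hp
  obtain ⟨R, hRE, hR, hRE'⟩ := exists_isRightmost_subset π hE hE'E
  have hhR : h ∉ R := hh R ⟨hRE', hR⟩
  rw [← hRE']
  exact patternOf_le_patternOf π fun x hx =>
    Finset.mem_erase.2 ⟨ne_of_mem_of_not_mem hx hhR, hRE hx⟩

lemma neg_one_pow_sub_add_neg_one_pow_sub_succ {c : ℕ} (hc : c < n) :
    (-1 : ℤ) ^ (n - c) + (-1) ^ (n - (c + 1)) = 0 := by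
  rw [show n - c = n - (c + 1) + 1 by omega, pow_succ]
  ring

-- Toggling the unlinked letter `h` is a sign-reversing involution.
lemma sum_normal_neg_one_pow_eq_zero {p : PermPat} {h : Fin n} (hlink : ¬ Linked π h)
    (hh : ∀ R, EhatMem p π R → h ∉ R) :
    ∑ E ∈ Finset.univ.filter (fun E => IsNormal π E ∧ p ≤ patternOf π E),
      (-1 : ℤ) ^ (n - E.card) = 0 := by
  refine Finset.sum_involution (fun E _ => if h ∈ E then E.erase h else insert h E)
    (fun E _ => ?_) (fun E _ _ => ?_) (fun E hE => ?_) (fun E _ => ?_)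
  · by_cases hE : h ∈ E
    · rw [if_pos hE, ← Finset.card_erase_add_one hE, add_comm]
      exact neg_one_pow_sub_add_neg_one_pow_sub_succ
        ((Finset.card_erase_lt_of_mem hE).trans_le (card_finset_fin_le E))
    · rw [if_neg hE, Finset.card_insert_of_notMem hE]
      exact neg_one_pow_sub_add_neg_one_pow_sub_succ
        ((Finset.card_lt_card (Finset.ssubset_insert hE)).trans_le (card_finset_fin_le _))
  · split_ifs with hE
    · exact Finset.erase_ne_self.2 hE
    · exact Finset.insert_ne_self.2 hE
  · obtain ⟨hnormal, hp⟩ := (Finset.mem_filter.1 hE).2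
    refine Finset.mem_filter.2 ⟨Finset.mem_univ _, ?_⟩
    split_ifs with hhE
    · exact ⟨fun m hm => Finset.mem_erase.2 ⟨fun hmh => hlink (hmh ▸ hm), hnormal m hm⟩,
        le_patternOf_erase π hnormal hp hh⟩
    · exact ⟨fun m hm => Finset.mem_insert_of_mem (hnormal m hm),
        hp.trans (patternOf_le_patternOf π (Finset.subset_insert h E))⟩
  · by_cases hE : h ∈ E <;> simp [hE]

lemma NE_eq_card (p : PermPat) :
    NE p π = (Finset.univ.filter fun E => IsEmb p π E ∧ IsNormal π E).card := by
  rw [NE, ← Set.ncard_coe_finset, Finset.coe_filter]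
  simp

lemma NE_self : NE ⟨n, π⟩ π = 1 := by
  rw [NE_eq_card, Finset.card_eq_one]
  refine ⟨Finset.univ, Finset.ext fun E => ?_⟩
  simp only [Finset.mem_filter, Finset.mem_univ, true_and, Finset.mem_singleton]
  constructor
  · rintro ⟨hE, -⟩
    exact Finset.eq_univ_of_card E ((congrArg Sigma.fst hE).trans (Fintype.card_fin n).symm)
  · rintro rfl
    exact ⟨patternOf_univ π, fun _ _ => Finset.mem_univ _⟩

lemma sum_Icc_neg_one_pow_mul_NE (p : PermPat) :
    ∑ w ∈ Finset.Icc p ⟨n, π⟩, (-1 : ℤ) ^ (n - w.1) * NE w π =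
      ∑ E ∈ Finset.univ.filter (fun E => IsNormal π E ∧ p ≤ patternOf π E),
        (-1 : ℤ) ^ (n - E.card) := by
  rw [← Finset.sum_fiberwise_of_maps_to (g := patternOf π) (t := Finset.Icc p ⟨n, π⟩)
    fun E hE => Finset.mem_Icc.2 ⟨(Finset.mem_filter.1 hE).2.2, patternOf_le π E⟩]
  refine Finset.sum_congr rfl fun w hw => ?_
  have hfiber : (Finset.univ.filter fun E => IsNormal π E ∧ p ≤ patternOf π E).filter
      (fun E => patternOf π E = w) = Finset.univ.filter fun E => IsEmb w π E ∧ IsNormal π E := by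
    rw [Finset.filter_filter]
    refine Finset.filter_congr fun E _ => ?_
    constructor
    · rintro ⟨⟨hE, -⟩, hEw⟩
      exact ⟨hEw, hE⟩
    · rintro ⟨hEw, hE⟩
      exact ⟨⟨hE, hEw ▸ (Finset.mem_Icc.1 hw).1⟩, hEw⟩
  rw [hfiber, NE_eq_card, mul_comm, ← nsmul_eq_mul, ← Finset.sum_const]
  refine Finset.sum_congr rfl fun E hE => ?_
  rw [← (Finset.mem_filter.1 hE).2.1]
  rfl

end SignedSum

/-- If the interval `[σ,π]` is single (i.e. for every `λ` with
`σ ≤ λ < π` there is a letter of `π` belonging to no rightmost embedding of `λ` in `π`),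
then `μ(σ,π) = (−1)^{|π|−|σ|}·NE(σ,π)`. -/
theorem mobius_of_single {k n : ℕ} (σ : Equiv.Perm (Fin k)) (π : Equiv.Perm (Fin n))
    (hle : PatLe ⟨k, σ⟩ ⟨n, π⟩)
    (hsingle : ∀ p : PermPat, PatLe ⟨k, σ⟩ p → PatLe p ⟨n, π⟩ → p ≠ ⟨n, π⟩ →
      ∃ j : Fin n, ∀ E : Finset (Fin n), EhatMem p π E → j ∉ E) :
    permMu ⟨k, σ⟩ ⟨n, π⟩ = (-1 : ℤ) ^ (n - k) * (NE ⟨k, σ⟩ π : ℤ) := by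
  rw [PermPat.permMu_eq_mu]
  refine IncidenceAlgebra.mu_eq_of_sum_Icc_eq_zero (f := fun w => (-1 : ℤ) ^ (n - w.1) * NE w π)
    hle (by simp [NE_self]) fun p hσp hpπ => ?_
  obtain ⟨j, hj⟩ := hsingle p hσp hpπ.le hpπ.ne
  obtain ⟨h, hlink, hh⟩ := exists_unlinked_forall_ehatMem_not_mem π hj
  rw [sum_Icc_neg_one_pow_mul_NE, sum_normal_neg_one_pow_eq_zero π hlink hh]
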